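/- arXiv:2005.00924 — 3 statements merged into one kernel-verified Lean document; each statement's English description precedes it below -/
import Mathlib

section
/- The coefficient of s_{111} in the Frobenius characteristic of DBF₃, namely (1/6)·(k³ + 3k²j + 3kj² + j³ + 6k² + 6kj − k + 5j), is a nonnegative integer for all natural numbers k and j. -/
lemma cube6 : ∀ a : ℕ, 6 ∣ a^3 + 5*a := by
  intro a
  induction a with
  | zero => decide
  | succ n ih =>
    obtain ⟨t, ht⟩ := ih
    obtain ⟨s, hs⟩ := (Nat.even_mul_succ_self n).two_dvd
    have h : (n+1)^3 + 5*(n+1) = (n^3 + 5*n) + 3*(n*(n+1)) + 6 := by ring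
    rw [h, ht, hs]
    omega

theorem stmt_2 : ∀ k j : ℕ, ∃ m : ℕ,
    (1/6 : ℚ) * ((k:ℚ)^3 + 3*k^2*j + 3*k*j^2 + j^3 + 6*k^2 + 6*k*j - k + 5*j) = (m : ℚ) := by
  intro k j
  obtain ⟨t, ht⟩ := cube6 (k + j)
  have hkk : k ≤ k * k := by nlinarith
  have hge : k ≤ t + k * k + k * j := by omega
  refine ⟨t + k * k + k * j - k, ?_⟩
  have htq : ((k:ℚ) + j)^3 + 5*((k:ℚ)+j) = 6 * t := by
    have := congrArg (Nat.cast : ℕ → ℚ) ht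
    push_cast at this
    linarith [this]
  rw [Nat.cast_sub hge]
  push_cast
  field_simp
  ring_nf
  ring_nf at htq
  linarith [htq]
end

section
/- For every n ≥ 1, the quantity (1/(2(n+1))) · ∑_{i=0}^{n+1} C(n+1, i) · iⁿ is a positive integer; it equals 28, 288, 3936 for n = 3, 4, 5 respectively. -/
open Finset

def A (N k : ℕ) : ℕ := ∑ i ∈ range (N + 1), Nat.choose N i * i ^ k

lemma A_key (N k : ℕ) :
    A (N + 1) (k + 1) = (N + 1) * ∑ t ∈ range (k + 1), Nat.choose k t * A N t := by
  have h1 : A (N + 1) (k + 1)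
      = ∑ j ∈ range (N + 1), Nat.choose (N + 1) (j + 1) * (j + 1) ^ (k + 1) := by
    rw [A, Finset.sum_range_succ']
    simp
  rw [h1]
  have h2 : ∀ j, Nat.choose (N + 1) (j + 1) * (j + 1) ^ (k + 1)
      = (N + 1) * (Nat.choose N j * (j + 1) ^ k) := by
    intro j
    have := Nat.add_one_mul_choose_eq N j
    calc Nat.choose (N + 1) (j + 1) * (j + 1) ^ (k + 1)
        = (Nat.choose (N + 1) (j + 1) * (j + 1)) * (j + 1) ^ k := by ring
      _ = ((N + 1) * Nat.choose N j) * (j + 1) ^ k := by rw [← this]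
      _ = (N + 1) * (Nat.choose N j * (j + 1) ^ k) := by ring
  simp_rw [h2, ← Finset.mul_sum]
  congr 1
  have h3 : ∀ j : ℕ, (j + 1) ^ k = ∑ t ∈ range (k + 1), j ^ t * Nat.choose k t := by
    intro j
    have := add_pow j 1 k
    simpa using this
  simp_rw [h3, Finset.mul_sum]
  rw [Finset.sum_comm]
  apply Finset.sum_congr rfl
  intro t _
  rw [A, Finset.mul_sum]
  apply Finset.sum_congr rfl
  intro j _
  ring

lemma A_even : ∀ k N, k < N → 2 ∣ A N k := by
  intro k
  induction k using Nat.strong_induction_on with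
  | _ k ih =>
    intro N hk
    match k, N with
    | 0, N + 1 =>
      have : A (N + 1) 0 = 2 ^ (N + 1) := by simp [A, Nat.sum_range_choose]
      rw [this]
      exact dvd_pow_self 2 (Nat.succ_ne_zero N)
    | k + 1, N + 1 =>
      rw [A_key]
      apply Dvd.dvd.mul_left
      apply Finset.dvd_sum
      intro t ht
      have ht' := Finset.mem_range.mp ht
      exact Dvd.dvd.mul_left (ih t (by omega) N (by omega)) _

theorem stmt_5 :
    (∀ n : ℕ, 1 ≤ n → ∃ m : ℕ, 0 < m ∧
      (∑ i ∈ Finset.range (n + 2), Nat.choose (n + 1) i * i ^ n) = 2 * (n + 1) * m) ∧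
    (∑ i ∈ Finset.range 5, Nat.choose 4 i * i ^ 3) = 2 * 4 * 28 ∧
    (∑ i ∈ Finset.range 6, Nat.choose 5 i * i ^ 4) = 2 * 5 * 288 ∧
    (∑ i ∈ Finset.range 7, Nat.choose 6 i * i ^ 5) = 2 * 6 * 3936 := by
  refine ⟨?_, by decide, by decide, by decide⟩
  intro n hn
  obtain ⟨n, rfl⟩ : ∃ m, n = m + 1 := ⟨n - 1, by omega⟩
  have hS : (∑ i ∈ Finset.range (n + 1 + 2), Nat.choose (n + 1 + 1) i * i ^ (n + 1))
      = A (n + 1 + 1) (n + 1) := rfl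
  rw [hS, A_key]
  set T := ∑ t ∈ range (n + 1), Nat.choose n t * A (n + 1) t with hT
  have h2 : 2 ∣ T := by
    apply Finset.dvd_sum
    intro t ht
    exact Dvd.dvd.mul_left (A_even t (n + 1) (by simp at ht; omega)) _
  obtain ⟨m, hm⟩ := h2
  refine ⟨m, ?_, ?_⟩
  · have hTpos : 0 < T := by
      rw [hT]
      apply Finset.sum_pos'
      · intro i _; exact Nat.zero_le _
      · refine ⟨0, Finset.mem_range.mpr (by omega), ?_⟩
        simp [A]
        exact Finset.sum_pos' (fun i _ => Nat.zero_le _)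
          ⟨0, Finset.mem_range.mpr (by omega), by simp⟩
    omega
  · rw [hm]; ring
end

section
/- For every n ≥ 1, the number (2/(n(n+1))) · C(4n+1, n−1) is a positive integer. -/
theorem stmt_8 : ∀ n : ℕ, 1 ≤ n → ∃ m : ℕ, 0 < m ∧
    2 * Nat.choose (4 * n + 1) (n - 1) = n * (n + 1) * m := by
  intro n hn
  set C := Nat.choose (4 * n + 1) (n - 1) with hC
  -- key identities from succ_mul_choose_eq
  have hA : (4 * n + 2) * C = Nat.choose (4 * n + 2) n * n := by
    have h := Nat.add_one_mul_choose_eq (4 * n + 1) (n - 1)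
    have hs : n - 1 + 1 = n := by omega
    simpa [hs, Nat.succ_eq_add_one] using h
  have hB : (4 * n + 3) * Nat.choose (4 * n + 2) n
      = Nat.choose (4 * n + 3) (n + 1) * (n + 1) := by
    have h := Nat.add_one_mul_choose_eq (4 * n + 2) n
    simpa [Nat.succ_eq_add_one] using h
  -- coprimality facts
  have c1 : Nat.Coprime n (2 * n + 1) := by
    have h : 2 * n + 1 = 1 + 2 * n := by ring
    rw [h]
    exact (Nat.coprime_add_mul_right_right n 1 2).mpr (Nat.coprime_one_right n)
  have csucc : Nat.Coprime (n + 1) n := by simp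
  have c2 : Nat.Coprime (n + 1) (2 * n + 1) := by
    have h : 2 * n + 1 = n + 1 * (n + 1) := by ring
    rw [h]
    exact (Nat.coprime_add_mul_right_right (n + 1) n 1).mpr csucc
  have c3 : Nat.Coprime (n + 1) (4 * n + 3) := by
    have h : 4 * n + 3 = n + 3 * (n + 1) := by ring
    rw [h]
    exact (Nat.coprime_add_mul_right_right (n + 1) n 3).mpr csucc
  -- n ∣ 2 * C
  have hn2 : n ∣ 2 * C * (2 * n + 1) := by
    refine ⟨Nat.choose (4 * n + 2) n, ?_⟩
    calc 2 * C * (2 * n + 1) = (4 * n + 2) * C := by ring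
      _ = Nat.choose (4 * n + 2) n * n := hA
      _ = n * Nat.choose (4 * n + 2) n := by ring
  have hndvd : n ∣ 2 * C := (Nat.Coprime.dvd_of_dvd_mul_right c1) hn2
  -- (n+1) ∣ 2 * C
  have hsucc2 : (n + 1) ∣ 2 * C * (2 * n + 1) * (4 * n + 3) := by
    refine ⟨n * Nat.choose (4 * n + 3) (n + 1), ?_⟩
    calc 2 * C * (2 * n + 1) * (4 * n + 3)
        = (4 * n + 3) * ((4 * n + 2) * C) := by ring
      _ = (4 * n + 3) * (Nat.choose (4 * n + 2) n * n) := by rw [hA]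
      _ = ((4 * n + 3) * Nat.choose (4 * n + 2) n) * n := by ring
      _ = (Nat.choose (4 * n + 3) (n + 1) * (n + 1)) * n := by rw [hB]
      _ = (n + 1) * (n * Nat.choose (4 * n + 3) (n + 1)) := by ring
  have hsuccdvd : (n + 1) ∣ 2 * C :=
    (Nat.Coprime.dvd_of_dvd_mul_right c2)
      ((Nat.Coprime.dvd_of_dvd_mul_right c3) hsucc2)
  have hmul : n * (n + 1) ∣ 2 * C :=
    Nat.Coprime.mul_dvd_of_dvd_of_dvd csucc.symm hndvd hsuccdvd
  obtain ⟨m, hm⟩ := hmul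
  refine ⟨m, ?_, hm⟩
  have hCpos : 0 < C := Nat.choose_pos (by omega)
  rcases Nat.eq_zero_or_pos m with h0 | h
  · subst h0; simp at hm; omega
  · exact h
end
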